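/- arXiv:0705.4662 — 2 statements merged into one kernel-verified Lean document; each statement's English description precedes it below -/
import Mathlib

section
/- For every n ≥ 1 and every nonempty finite subset x of ZMod n, the word metric on the lamplighter group satisfies ρ((x, 0), (∅, 0)) ≤ 6·max_{k ∈ x} (d_{Cₙ}(0, k) + 1). -/
/-
With `M = max_{k ∈ x} (d(0, k) + 1)`, every lit lamp lies on the arc of radius `r = M - 1`
around `0`, so `(x, 0)` is produced by
walking the lamplighter to one end of that arc, sweeping across its `2r + 1` positions while
toggling each lit lamp once, and walking back: `r + 2(2r + 1) + (r + 1) = 6r + 3 ≤ 6M` generators.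
-/


open Finset

/-- The lamplighter group `C₂ ≀ Cₙ`: pairs `(x, j)` of a finite subset `x` of `ZMod n`
(the set of lit lamps) and a position `j ∈ ZMod n`. -/
abbrev LL (n : ℕ) : Type := Finset (ZMod n) × ZMod n

namespace LL

/-- Multiplication `(x, g)·(y, k) = (x △ (y − g), g + k)` where
`y − g = {h : g + h ∈ y}`. -/
def gmul {n : ℕ} (a b : LL n) : LL n :=
  (symmDiff a.1 (b.1.image (fun h => h - a.2)), a.2 + b.2)

def gone (n : ℕ) : LL n := (∅, 0)

def ginv {n : ℕ} (a : LL n) : LL n := (a.1.image (fun h => h + a.2), -a.2)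

instance instGroup (n : ℕ) : Group (LL n) where
  mul := gmul
  one := gone n
  inv := ginv
  mul_assoc a b c := by
    show gmul (gmul a b) c = gmul a (gmul b c)
    unfold gmul
    refine Prod.ext ?_ (add_assoc _ _ _)
    simp only
    rw [Finset.image_symmDiff _ _ (sub_left_injective), Finset.image_image,
      symmDiff_assoc]
    congr 2
    ext t
    simp [sub_sub, add_comm]
  one_mul a := by
    show gmul (gone n) a = a
    unfold gmul gone
    refine Prod.ext ?_ (zero_add _)
    simp only [← Finset.bot_eq_empty, bot_symmDiff]
    simp
  mul_one a := by
    show gmul a (gone n) = a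
    unfold gmul gone
    refine Prod.ext ?_ (add_zero _)
    show symmDiff a.1 (Finset.image _ ∅) = a.1
    rw [Finset.image_empty]
    exact symmDiff_bot a.1
  inv_mul_cancel a := by
    show gmul (ginv a) a = gone n
    unfold gmul ginv gone
    refine Prod.ext ?_ (neg_add_cancel _)
    simp only
    have h : (fun h => h - -a.2) = (fun h : ZMod n => h + a.2) := by
      funext t; rw [sub_neg_eq_add]
    rw [h, symmDiff_self, Finset.bot_eq_empty]

end LL

/-- The word "distance" associated to a set `T ⊆ G`: the least `L` such
that `a⁻¹ * b` is a product of `L` elements of `T`. -/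
noncomputable def wordDist {G : Type*} [Group G] (T : Set G) (a b : G) : ℕ :=
  sInf {L : ℕ | ∃ l : List G, l.length = L ∧ (∀ g ∈ l, g ∈ T) ∧ l.prod = a⁻¹ * b}

/-- The two standard generators `s₁ = ({0}, 0)` and `s₂ = (∅, 1)` of the
lamplighter group. -/
def lampGens (n : ℕ) : Set (LL n) :=
  {(({0} : Finset (ZMod n)), (0 : ZMod n)), ((∅ : Finset (ZMod n)), (1 : ZMod n))}

/-- The word metric `ρ` on the lamplighter group with respect to
`{s₁, s₂, s₁⁻¹, s₂⁻¹}`. -/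
noncomputable def lampRho (n : ℕ) (a b : LL n) : ℕ :=
  wordDist (lampGens n ∪ (lampGens n)⁻¹) a b


/-- The cycle metric on `ZMod n`: the least `|a|` over integers `a` with
`a ≡ j - k (mod n)`. -/
noncomputable def cycDist (n : ℕ) (j k : ZMod n) : ℕ :=
  sInf {m : ℕ | ∃ a : ℤ, a.natAbs = m ∧ (a : ZMod n) = j - k}

section WordLength

variable {G : Type*} [Group G] (T : Set G)

def WordLengthLE (g : G) (L : ℕ) : Prop :=
  ∃ l : List G, l.length ≤ L ∧ (∀ t ∈ l, t ∈ T) ∧ l.prod = g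

variable {T}

namespace WordLengthLE

theorem one : WordLengthLE T 1 0 := ⟨[], le_rfl, by simp, rfl⟩

theorem of_mem {t : G} (ht : t ∈ T) : WordLengthLE T t 1 :=
  ⟨[t], le_rfl, by simpa using ht, List.prod_singleton⟩

theorem mono {g : G} {L L' : ℕ} (h : WordLengthLE T g L) (hL : L ≤ L') :
    WordLengthLE T g L' :=
  let ⟨l, hl, hT, hg⟩ := h
  ⟨l, hl.trans hL, hT, hg⟩

theorem mul {g h : G} {L L' : ℕ} (hg : WordLengthLE T g L) (hh : WordLengthLE T h L') :
    WordLengthLE T (g * h) (L + L') := by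
  obtain ⟨l, hl, hT, rfl⟩ := hg
  obtain ⟨l', hl', hT', rfl⟩ := hh
  refine ⟨l ++ l', by simp; omega, ?_, List.prod_append⟩
  simpa [or_imp, forall_and] using And.intro hT hT'

theorem pow {t : G} (ht : t ∈ T) (m : ℕ) : WordLengthLE T (t ^ m) m := by
  induction m with
  | zero => simpa using one
  | succ m ih => simpa [pow_succ] using ih.mul (of_mem ht)

theorem zpow {t : G} (ht : t ∈ T) (ht' : t⁻¹ ∈ T) (c : ℤ) :
    WordLengthLE T (t ^ c) c.natAbs := by
  obtain ⟨m, rfl | rfl⟩ := Int.eq_nat_or_neg c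
  · simpa using pow ht m
  · simpa using pow ht' m

end WordLengthLE

theorem wordDist_le_of_wordLengthLE {a b : G} {L : ℕ} (h : WordLengthLE T (a⁻¹ * b) L) :
    wordDist T a b ≤ L :=
  let ⟨l, hl, hT, hprod⟩ := h
  (Nat.sInf_le ⟨l, rfl, hT, hprod⟩ : wordDist T a b ≤ l.length).trans hl

end WordLength

theorem cycDist_spec (n : ℕ) (j k : ZMod n) :
    ∃ a : ℤ, a.natAbs = cycDist n j k ∧ (a : ZMod n) = j - k :=
  have ⟨a, ha⟩ := ZMod.intCast_surjective (j - k)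
  Nat.sInf_mem (show Set.Nonempty {m : ℕ | ∃ a : ℤ, a.natAbs = m ∧ (a : ZMod n) = j - k}
    from ⟨_, a, rfl, ha⟩)

theorem exists_natCast_eq_of_cycDist_le {n r : ℕ} {j k : ZMod n} (h : cycDist n j k ≤ r) :
    ∃ i ≤ 2 * r, (i : ZMod n) = j - k + r := by
  obtain ⟨a, ha, hak⟩ := cycDist_spec n j k
  refine ⟨(a + r).toNat, by omega, ?_⟩
  rw [← hak, ← Int.cast_natCast, Int.toNat_of_nonneg (by omega)]
  push_cast
  ring

namespace LL

variable {n : ℕ}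

theorem mk_mul_mk (x y : Finset (ZMod n)) (g k : ZMod n) :
    ((x, g) : LL n) * (y, k) = (symmDiff x (y.image (· - g)), g + k) := rfl

theorem one_eq : (1 : LL n) = (∅, 0) := rfl

theorem inv_mk (x : Finset (ZMod n)) (g : ZMod n) :
    ((x, g) : LL n)⁻¹ = (x.image (· + g), -g) := rfl

theorem mk_mul_shift (x : Finset (ZMod n)) (g k : ZMod n) :
    ((x, g) : LL n) * (∅, k) = (x, g + k) := by
  rw [mk_mul_mk, image_empty, ← bot_eq_empty, symmDiff_bot]

theorem shift_pow (m : ℕ) : ((∅, 1) : LL n) ^ m = (∅, (m : ZMod n)) := by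
  induction m with
  | zero => simp [one_eq]
  | succ m ih => rw [pow_succ, ih, mk_mul_shift, Nat.cast_succ]

theorem shift_zpow (c : ℤ) : ((∅, 1) : LL n) ^ c = (∅, (c : ZMod n)) := by
  obtain ⟨m, rfl | rfl⟩ := Int.eq_nat_or_neg c
  · simpa using shift_pow m
  · rw [zpow_neg, zpow_natCast, shift_pow]
    simp [inv_mk]

theorem mul_toggle {y : Finset (ZMod n)} {g : ZMod n} (hy : -g ∉ y) :
    ((y, g) : LL n) * ({0}, 0) = (insert (-g) y, g) := by
  rw [mk_mul_mk]
  refine Prod.ext ?_ (add_zero g)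
  ext a
  simp only [mem_symmDiff, image_singleton, zero_sub, mem_singleton, mem_insert]
  grind

theorem shift_mul_mk (y : Finset (ZMod n)) (a k : ZMod n) :
    ((∅, a) : LL n) * (y, k) = (y.image (· - a), a + k) := by
  rw [mk_mul_mk, ← bot_eq_empty, bot_symmDiff]

theorem toggle_mem : (({0}, 0) : LL n) ∈ lampGens n ∪ (lampGens n)⁻¹ := Or.inl (Or.inl rfl)

theorem shift_mem : ((∅, 1) : LL n) ∈ lampGens n ∪ (lampGens n)⁻¹ := Or.inl (Or.inr rfl)

theorem shift_inv_mem : ((∅, 1) : LL n)⁻¹ ∈ lampGens n ∪ (lampGens n)⁻¹ :=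
  Or.inr (by rw [Set.mem_inv, inv_inv]; exact Or.inr rfl)

/-- With this multiplication law `s₁` toggles the lamp at `-g` when the lamplighter stands at
`g`, so a sweep from `0` to `m` passes the lamps `0, -1, …, -(m - 1)`. -/
theorem wordLengthLE_sweep (m : ℕ) {x : Finset (ZMod n)}
    (hx : x ⊆ (range m).image (fun i : ℕ => -(i : ZMod n))) :
    WordLengthLE (lampGens n ∪ (lampGens n)⁻¹) ((x, (m : ZMod n)) : LL n) (2 * m) := by
  induction m generalizing x with
  | zero =>
    rw [range_zero, image_empty, subset_empty] at hx
    subst hx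
    rw [Nat.cast_zero, ← one_eq]
    exact .one
  | succ m ih =>
    have hx' : x.erase (-m) ⊆ (range m).image (fun i : ℕ => -(i : ZMod n)) := by
      intro a ha
      have := hx (mem_of_mem_erase ha)
      rw [range_add_one, image_insert, mem_insert] at this
      exact this.resolve_left (ne_of_mem_erase ha)
    have hshift : ((x, ((m + 1 : ℕ) : ZMod n)) : LL n) = (x, (m : ZMod n)) * (∅, 1) := by
      rw [mk_mul_shift, Nat.cast_succ]
    by_cases hm : -(m : ZMod n) ∈ x
    · have hlit : ((x, (m : ZMod n)) : LL n) = (x.erase (-m), (m : ZMod n)) * ({0}, 0) := by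
        rw [mul_toggle (notMem_erase _ _), insert_erase hm]
      rw [hshift, hlit]
      exact (((ih hx').mul (.of_mem toggle_mem)).mul (.of_mem shift_mem)).mono (by omega)
    · rw [erase_eq_of_notMem hm] at hx'
      rw [hshift]
      exact ((ih hx').mul (.of_mem shift_mem)).mono (by omega)

theorem lampRho_le_of_cycDist_le {n r : ℕ} {x : Finset (ZMod n)}
    (hx : ∀ k ∈ x, cycDist n 0 k ≤ r) :
    lampRho n (x, 0) (∅, 0) ≤ 6 * r + 3 := by
  have hsub : x.image (· - (r : ZMod n)) ⊆
      (range (2 * r + 1)).image (fun i : ℕ => -(i : ZMod n)) := by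
    intro a ha
    obtain ⟨k, hk, rfl⟩ := mem_image.1 ha
    obtain ⟨i, hi, hik⟩ := exists_natCast_eq_of_cycDist_le (hx k hk)
    exact mem_image.2 ⟨i, mem_range.2 (by omega), by rw [hik]; ring⟩
  have hdecomp : ((x, 0) : LL n)⁻¹ * (∅, 0) =
      (∅, 1) ^ (-(r : ℤ)) * (x.image (· - (r : ZMod n)), ((2 * r + 1 : ℕ) : ZMod n)) *
        (∅, 1) ^ (-(r + 1 : ℤ)) := by
    rw [shift_zpow, shift_zpow, shift_mul_mk, mk_mul_shift, inv_mk, mk_mul_shift]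
    refine Prod.ext ?_ ?_
    · simp [image_image, Function.comp_def]
    · push_cast
      ring
  apply wordDist_le_of_wordLengthLE
  rw [hdecomp]
  exact (((WordLengthLE.zpow shift_mem shift_inv_mem _).mul (wordLengthLE_sweep _ hsub)).mul
    (WordLengthLE.zpow shift_mem shift_inv_mem _)).mono (by omega)

end LL

/-- For nonempty `x`, `ρ((x, 0), (∅, 0)) ≤ 6·max_{k ∈ x} (d_{Cₙ}(0,k)+1)`. -/
theorem lamplighter_word_metric_upper :
    ∀ n : ℕ, 1 ≤ n → ∀ x : Finset (ZMod n), x.Nonempty →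
      lampRho n (x, (0 : ZMod n)) ((∅ : Finset (ZMod n)), (0 : ZMod n)) ≤
        6 * x.sup (fun k => cycDist n 0 k + 1) := by
  intro n _ x hx
  set M := x.sup (fun k => cycDist n 0 k + 1)
  have hle : ∀ k ∈ x, cycDist n 0 k + 1 ≤ M := fun k hk =>
    le_sup (f := fun k => cycDist n 0 k + 1) hk
  have hρ := LL.lampRho_le_of_cycDist_le (r := M - 1) fun k hk => by
    have := hle k hk
    omega
  obtain ⟨k₀, hk₀⟩ := hx
  have := hle k₀ hk₀
  omega
end

section
/- There exists a universal constant c > 0 such that for every n ≥ 3 and every nonempty finite subset x of ZMod n, writing ℓ = max_{k ∈ x} d_{Cₙ}(0, k), one has Σ_{I ∈ 𝓘} Σ_{A ⊆ I} Σ_{k ∈ ZMod n} 1[|A ∩ {j − k : j ∈ x}| is odd]·(v^I_k)² ≥ c·(1 + ℓ²). -/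
open Finset

/-- The arc `{a, a+1, …, a + (⌊n/3⌋ - 1)}` of length `m = ⌊n/3⌋` in `ZMod n`.
As `a` ranges over `ZMod n` this produces the family `𝓘` of all `n` such arcs. -/
def arc (n : ℕ) (a : ZMod n) : Finset (ZMod n) :=
  (Finset.range (n / 3)).image (fun i : ℕ => a + (i : ZMod n))

/-- distance from a point `k` to the arc starting at `a`: `min_{i ∈ I} d_{Cₙ}(k, i)`. -/
noncomputable def dArc (n : ℕ) (a k : ZMod n) : ℕ :=
  sInf {m : ℕ | ∃ i ∈ arc n a, cycDist n k i = m}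

/-- `η = 1 / (n · 2^{n/6})`. -/
noncomputable def eta (n : ℕ) : ℝ := 1 / ((n : ℝ) * (2 : ℝ) ^ ((n : ℝ) / 6))

/-- `δ = 1 / (√n · 2^{n/6})`. -/
noncomputable def dlt (n : ℕ) : ℝ := 1 / (Real.sqrt n * (2 : ℝ) ^ ((n : ℝ) / 6))

/-- The vector `v^I` attached to the arc `I` starting at `a`:
`v^I_k = η` for `k ∈ I` and `v^I_k = δ·√(d(k, I))` for `k ∉ I`. -/
noncomputable def vI (n : ℕ) (a k : ZMod n) : ℝ :=
  if k ∈ arc n a then eta n else dlt n * Real.sqrt (dArc n a k)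

/-! Fix `j₀ ∈ x`. For an arc `I` starting at `a` and `k = j₀ - i` with `i ∈ I`, the set
`I ∩ (x - k)` contains `i`, so exactly half of the `2^m` subsets `A ⊆ I` meet `x - k` in an odd
number of points. Hence the sum is at least `2^(m-1) Σ_a Σ_{t<m} (v^I_{j₀-a-t})²`, and
`2^(m-1) δ² ≥ 1/(4n)`. Each `(v^I_k)²` is at least `η² = δ²/n`, and also at least
`δ² (d(k, a) - (m - 1))⁺` by the triangle inequality; for `k = j₀ - a - t` this distance is
`d(j₀ - 2a - t, 0)`. As `a` runs over `ZMod n` and `t` over two consecutive values, `j₀ - 2a - t`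
covers every residue, so the double sum of these excesses is at least
`⌊m/2⌋ Σ_s (d(s, 0) - (m - 1))⁺ ≳ n³`. This gives a lower bound `≳ n² ≥ c (1 + ℓ²)` because
`ℓ ≤ n/2`; the `η²` terms cover the small `n` with `⌊m/2⌋ = 0`. -/

section Parity

variable {α M : Type*} [DecidableEq α] [AddCommMonoid M]

theorem sum_powerset_ite_odd_card_inter {I B : Finset α} {c : α} (hcI : c ∈ I)
    (hcB : c ∈ B) (w : M) :
    ∑ A ∈ I.powerset, (if Odd (A ∩ B).card then w else 0) = 2 ^ (I.card - 1) • w := by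
  have hc : c ∉ I.erase c := notMem_erase c I
  rw [← insert_erase hcI, sum_powerset_insert hc, ← sum_add_distrib, card_insert_of_notMem hc,
    Nat.add_sub_cancel, ← card_powerset, ← sum_const]
  refine sum_congr rfl fun A hA => ?_
  have hcA : c ∉ A ∩ B := fun h => hc (mem_powerset.1 hA (mem_inter.1 h).1)
  rw [insert_inter_of_mem hcB, card_insert_of_notMem hcA]
  by_cases h : Odd (A ∩ B).card <;> simp [h, Nat.odd_add_one]

theorem two_pow_smul_sum_le_sum_powerset_ite_odd {G : Type*} [AddCommGroup G] [Fintype G]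
    [DecidableEq G] [PartialOrder M] [IsOrderedAddMonoid M] (I x : Finset G) {j : G} (hj : j ∈ x)
    (w : G → M) (hw : ∀ k, 0 ≤ w k) :
    2 ^ (I.card - 1) • ∑ i ∈ I, w (j - i) ≤
      ∑ A ∈ I.powerset, ∑ k, if Odd (A ∩ x.image (· - k)).card then w k else 0 := by
  rw [sum_comm, smul_sum]
  calc ∑ i ∈ I, 2 ^ (I.card - 1) • w (j - i)
      = ∑ k ∈ I.image (j - ·), ∑ A ∈ I.powerset,
          if Odd (A ∩ x.image (· - k)).card then w k else 0 := by
        rw [sum_image fun _ _ _ _ h => sub_right_injective h]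
        refine sum_congr rfl fun i hi => (sum_powerset_ite_odd_card_inter hi ?_ _).symm
        exact mem_image.2 ⟨j, hj, sub_sub_cancel j i⟩
    _ ≤ _ := sum_le_sum_of_subset_of_nonneg (subset_univ _) fun k _ _ =>
        sum_nonneg fun A _ => by split_ifs <;> simp [hw k]

end Parity

section Doubling

variable {M : Type*} [AddCommMonoid M] [PartialOrder M] [IsOrderedAddMonoid M]

theorem sum_le_sum_comp_of_surjective {ι κ : Type*} [Fintype ι] [Fintype κ] {ψ : κ → ι}
    (hψ : Function.Surjective ψ) (g : ι → M) (hg : ∀ i, 0 ≤ g i) :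
    ∑ i, g i ≤ ∑ k, g (ψ k) := by
  classical
  obtain ⟨ρ, hρ⟩ := hψ.hasRightInverse
  calc ∑ i, g i = ∑ k ∈ univ.image ρ, g (ψ k) := by
        rw [sum_image fun a _ b _ h => hρ.injective h]
        simp only [hρ _]
    _ ≤ _ := sum_le_sum_of_subset_of_nonneg (subset_univ _) fun k _ _ => hg _

theorem nsmul_le_sum_range_two_mul {f : ℕ → M} {T : M} (h : ∀ u, T ≤ f (2 * u) + f (2 * u + 1))
    (K : ℕ) : K • T ≤ ∑ t ∈ range (2 * K), f t := by
  induction K with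
  | zero => simp
  | succ K ih =>
    rw [Nat.mul_succ, sum_range_succ, sum_range_succ, add_assoc, succ_nsmul]
    exact add_le_add ih (h K)

variable {n : ℕ} [NeZero n]

theorem sum_le_sum_sub_two_mul (g : ZMod n → M) (hg : ∀ s, 0 ≤ g s) (c : ZMod n) :
    ∑ s, g s ≤ ∑ a : ZMod n, (g (c - 2 * a) + g (c - 2 * a - 1)) := by
  have hψ : Function.Surjective
      fun p : ZMod n × Fin 2 => c - 2 * p.1 - ((p.2 : ℕ) : ZMod n) := by
    intro s
    refine ⟨(((c - s).val / 2 : ℕ), ⟨(c - s).val % 2, Nat.mod_lt _ two_pos⟩), ?_⟩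
    have h := congrArg (Nat.cast : ℕ → ZMod n) (Nat.div_add_mod (c - s).val 2)
    rw [ZMod.natCast_zmod_val] at h
    push_cast at h ⊢
    linear_combination -h
  refine (sum_le_sum_comp_of_surjective hψ g hg).trans_eq ?_
  simp [Fintype.sum_prod_type, Fin.sum_univ_two]

theorem half_nsmul_sum_le_sum_sum_range (g : ZMod n → M) (hg : ∀ s, 0 ≤ g s) (c : ZMod n)
    (K : ℕ) : (K / 2) • ∑ s, g s ≤ ∑ a : ZMod n, ∑ t ∈ range K, g (c - 2 * a - t) := by
  rw [sum_comm]
  calc (K / 2) • ∑ s, g s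
      ≤ ∑ t ∈ range (2 * (K / 2)), ∑ a : ZMod n, g (c - 2 * a - t) := by
        refine nsmul_le_sum_range_two_mul (fun u => ?_) _
        refine (sum_le_sum_sub_two_mul g hg (c - (2 * u : ℕ))).trans_eq ?_
        rw [← sum_add_distrib]
        refine sum_congr rfl fun a _ => ?_
        push_cast
        ring_nf
    _ ≤ _ := sum_le_sum_of_subset_of_nonneg (range_subset_range.2 (Nat.mul_div_le K 2))
        fun t _ _ => sum_nonneg fun a _ => hg _

end Doubling

section CycleMetric

variable {n : ℕ}

theorem cycDist_le_natAbs {j k : ZMod n} {a : ℤ} (h : (a : ZMod n) = j - k) :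
    cycDist n j k ≤ a.natAbs :=
  Nat.sInf_le ⟨a, rfl, h⟩

theorem cycDist_add_natCast_le (a : ZMod n) (t : ℕ) : cycDist n (a + t) a ≤ t :=
  cycDist_le_natAbs (a := t) (by simp)

variable [NeZero n]

theorem cycDist_eq_natAbs_valMinAbs (j k : ZMod n) :
    cycDist n j k = (j - k).valMinAbs.natAbs := by
  refine le_antisymm (cycDist_le_natAbs (ZMod.coe_valMinAbs _)) ?_
  obtain ⟨a, ha, hajk⟩ : ∃ a : ℤ, a.natAbs = cycDist n j k ∧ (a : ZMod n) = j - k :=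
    Nat.sInf_mem (s := {d | ∃ a : ℤ, a.natAbs = d ∧ (a : ZMod n) = j - k})
      ⟨_, _, rfl, ZMod.coe_valMinAbs (j - k)⟩
  rw [← ha]
  exact ZMod.natAbs_min_of_le_div_two n _ _ (by rw [ZMod.coe_valMinAbs, hajk])
    (ZMod.natAbs_valMinAbs_le _)

theorem cycDist_le_half (j k : ZMod n) : cycDist n j k ≤ n / 2 := by
  rw [cycDist_eq_natAbs_valMinAbs]
  exact ZMod.natAbs_valMinAbs_le _

theorem cycDist_eq_zero {j k : ZMod n} : cycDist n j k = 0 ↔ j = k := by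
  rw [cycDist_eq_natAbs_valMinAbs, Int.natAbs_eq_zero, ZMod.valMinAbs_eq_zero, sub_eq_zero]

theorem cycDist_sub_zero (j k : ZMod n) : cycDist n (j - k) 0 = cycDist n j k := by
  simp [cycDist_eq_natAbs_valMinAbs]

theorem cycDist_triangle (j k l : ZMod n) : cycDist n j l ≤ cycDist n j k + cycDist n k l := by
  simp only [cycDist_eq_natAbs_valMinAbs]
  calc (j - l).valMinAbs.natAbs = ((j - k) + (k - l)).valMinAbs.natAbs := by
        rw [sub_add_sub_cancel]
    _ ≤ ((j - k).valMinAbs + (k - l).valMinAbs).natAbs := ZMod.natAbs_valMinAbs_add_le _ _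
    _ ≤ _ := Int.natAbs_add_le _ _

theorem cycDist_natCast_zero {v : ℕ} (hv : v ≤ n / 2) : cycDist n v 0 = v := by
  rw [cycDist_eq_natAbs_valMinAbs, sub_zero, ZMod.valMinAbs_natCast_of_le_half hv,
    Int.natAbs_natCast]

end CycleMetric

section Arcs

variable {n : ℕ} {a : ZMod n}

theorem mem_arc {i : ZMod n} : i ∈ arc n a ↔ ∃ t < n / 3, a + t = i := by
  simp [arc]

theorem self_mem_arc (hn : 3 ≤ n) : a ∈ arc n a :=
  mem_arc.2 ⟨0, by omega, by simp⟩

theorem injOn_add_natCast_range : Set.InjOn (fun t : ℕ => a + t) (range (n / 3)) := by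
  intro t ht s hs h
  simp only [coe_range, Set.mem_Iio] at ht hs
  have := congrArg ZMod.val (add_left_cancel h)
  rwa [ZMod.val_natCast_of_lt (by omega), ZMod.val_natCast_of_lt (by omega)] at this

theorem card_arc : (arc n a).card = n / 3 := by
  rw [arc, card_image_of_injOn injOn_add_natCast_range, card_range]

theorem sum_arc {M : Type*} [AddCommMonoid M] (f : ZMod n → M) :
    ∑ i ∈ arc n a, f i = ∑ t ∈ range (n / 3), f (a + t) :=
  sum_image injOn_add_natCast_range

end Arcs

theorem exists_mem_arc_cycDist_eq_dArc {n : ℕ} (hn : 3 ≤ n) (a k : ZMod n) :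
    ∃ i ∈ arc n a, cycDist n k i = dArc n a k :=
  Nat.sInf_mem (s := {d | ∃ i ∈ arc n a, cycDist n k i = d}) ⟨_, a, self_mem_arc hn, rfl⟩

noncomputable def cycDistExcess (n : ℕ) (s : ZMod n) : ℕ :=
  cycDist n s 0 - (n / 3 - 1)

section Excess

variable {n : ℕ} [NeZero n]

theorem cycDistExcess_le_dArc (hn : 3 ≤ n) (a k : ZMod n) :
    cycDistExcess n (k - a) ≤ dArc n a k := by
  obtain ⟨i, hi, hki⟩ := exists_mem_arc_cycDist_eq_dArc hn a k
  obtain ⟨t, ht, rfl⟩ := mem_arc.1 hi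
  have := cycDist_triangle k (a + t) a
  have := cycDist_add_natCast_le a t
  rw [cycDistExcess, cycDist_sub_zero]
  omega

theorem one_le_dArc (hn : 3 ≤ n) {a k : ZMod n} (hk : k ∉ arc n a) : 1 ≤ dArc n a k := by
  obtain ⟨i, hi, hki⟩ := exists_mem_arc_cycDist_eq_dArc hn a k
  by_contra! h
  rw [Nat.lt_one_iff.1 h, cycDist_eq_zero] at hki
  exact hk (hki ▸ hi)

theorem cycDistExcess_eq_zero_of_mem_arc {a k : ZMod n} (hk : k ∈ arc n a) :
    cycDistExcess n (k - a) = 0 := by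
  obtain ⟨t, ht, rfl⟩ := mem_arc.1 hk
  have := cycDist_add_natCast_le a t
  rw [cycDistExcess, cycDist_sub_zero]
  omega

theorem sq_le_mul_sum_cycDistExcess (hn : 3 ≤ n) : n ^ 2 ≤ 72 * ∑ s, cycDistExcess n s := by
  -- the point `m - 1 + i` with `i < N` lies at distance `m - 1 + i ≤ n / 2` from `0`: excess `i`
  set N := n / 2 - n / 3 + 2
  have hinj : Set.InjOn (fun i : ℕ => ((n / 3 - 1 + i : ℕ) : ZMod n)) (range N) := by
    intro i hi j hj h
    simp only [coe_range, Set.mem_Iio] at hi hj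
    have := congrArg ZMod.val h
    rw [ZMod.val_natCast_of_lt (by omega), ZMod.val_natCast_of_lt (by omega)] at this
    omega
  have hsum : ∑ i ∈ range N, i ≤ ∑ s, cycDistExcess n s := by
    rw [← sum_image hinj |>.trans (sum_congr rfl fun i hi => ?_)]
    · exact sum_le_sum_of_subset (subset_univ _)
    · rw [mem_range] at hi
      rw [cycDistExcess, cycDist_natCast_zero (by omega)]
      omega
  have hgauss := sum_range_id_mul_two N
  have hN : n ≤ 6 * (N - 1) := by omega
  calc n ^ 2 ≤ 36 * ((N - 1) * (N - 1)) := by nlinarith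
    _ ≤ 36 * (N * (N - 1)) := by gcongr; omega
    _ ≤ 72 * ∑ s, cycDistExcess n s := by omega

end Excess

section Weights

variable {n : ℕ} [NeZero n]

theorem eta_sq : eta n ^ 2 = dlt n ^ 2 / n := by
  have hn : (0 : ℝ) < n := Nat.cast_pos.2 (NeZero.pos n)
  rw [eta, dlt, div_pow, div_pow, mul_pow, mul_pow, Real.sq_sqrt hn.le]
  field_simp

theorem vI_sq_ge (hn : 3 ≤ n) (a k : ZMod n) :
    (eta n ^ 2 + dlt n ^ 2 * cycDistExcess n (k - a)) / 2 ≤ vI n a k ^ 2 := by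
  have hn1 : (1 : ℝ) ≤ n := Nat.one_le_cast.2 (NeZero.pos n)
  have heta : eta n ^ 2 ≤ dlt n ^ 2 := by
    rw [eta_sq]
    exact div_le_self (sq_nonneg _) hn1
  by_cases hk : k ∈ arc n a
  · rw [vI, if_pos hk, cycDistExcess_eq_zero_of_mem_arc hk]
    simp only [Nat.cast_zero, mul_zero, add_zero]
    linarith [sq_nonneg (eta n)]
  · rw [vI, if_neg hk, mul_pow, Real.sq_sqrt (Nat.cast_nonneg _)]
    have h1 : (1 : ℝ) ≤ dArc n a k := Nat.one_le_cast.2 (one_le_dArc hn hk)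
    have h2 : (cycDistExcess n (k - a) : ℝ) ≤ dArc n a k :=
      Nat.cast_le.2 (cycDistExcess_le_dArc hn a k)
    nlinarith [sq_nonneg (dlt n)]

theorem inv_four_mul_le_two_pow_mul_dlt_sq (hn : 3 ≤ n) :
    1 / (4 * n) ≤ 2 ^ (n / 3 - 1) * dlt n ^ 2 := by
  have hn0 : (0 : ℝ) < n := Nat.cast_pos.2 (NeZero.pos n)
  have hP : ((2 : ℝ) ^ ((n : ℝ) / 6)) ^ 2 ≤ 4 * 2 ^ (n / 3 - 1) := by
    have hexp : n ≤ 3 * (2 + (n / 3 - 1)) := by omega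
    have hexp' : (n : ℝ) ≤ 3 * (2 + (n / 3 - 1) : ℕ) := by exact_mod_cast hexp
    rw [show (4 : ℝ) = 2 ^ 2 by norm_num, ← pow_add, ← Real.rpow_natCast, ← Real.rpow_natCast,
      ← Real.rpow_mul zero_le_two]
    exact Real.rpow_le_rpow_of_exponent_le one_le_two (by push_cast at hexp' ⊢; linarith)
  rw [dlt, div_pow, one_pow, mul_pow, Real.sq_sqrt hn0.le, mul_one_div,
    le_div_iff₀ (by positivity), div_mul_eq_mul_div, div_le_iff₀ (by positivity)]
  nlinarith

end Weights

section Assembly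

variable {n : ℕ} [NeZero n]

theorem cube_le_sum_sum_cycDistExcess (hn : 3 ≤ n) (c : ZMod n) :
    n ^ 3 ≤
      1944 * (n / 3 + ∑ a : ZMod n, ∑ t ∈ range (n / 3), cycDistExcess n (c - 2 * a - t)) := by
  have hT := sq_le_mul_sum_cycDistExcess hn
  have hS := half_nsmul_sum_le_sum_sum_range (cycDistExcess n) (fun _ => Nat.zero_le _) c (n / 3)
  rw [smul_eq_mul] at hS
  rcases lt_or_ge n 6 with h | h
  · have : n ^ 3 ≤ 5 ^ 3 := Nat.pow_le_pow_left (by omega) 3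
    omega
  · have hm : n ≤ 27 * (n / 3 / 2) := by omega
    calc n ^ 3 = n * n ^ 2 := by ring
      _ ≤ 27 * (n / 3 / 2) * (72 * ∑ s, cycDistExcess n s) := Nat.mul_le_mul hm hT
      _ = 1944 * (n / 3 / 2 * ∑ s, cycDistExcess n s) := by ring
      _ ≤ _ := by gcongr; exact hS.trans (Nat.le_add_left _ _)

theorem dlt_sq_mul_le_sum_sum_vI_sq (hn : 3 ≤ n) (c : ZMod n) :
    dlt n ^ 2 *
        ((n / 3 + ∑ a : ZMod n, ∑ t ∈ range (n / 3), cycDistExcess n (c - 2 * a - t) : ℕ) : ℝ) / 2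
      ≤
      ∑ a : ZMod n, ∑ t ∈ range (n / 3), vI n a (c - (a + t)) ^ 2 := by
  refine le_trans (le_of_eq ?_)
    (sum_le_sum fun a _ => sum_le_sum fun t _ => vI_sq_ge hn a (c - (a + t)))
  simp only [show ∀ a t : ZMod n, c - (a + t) - a = c - 2 * a - t from fun a t => by ring,
    add_div, sum_add_distrib, sum_const, card_range, card_univ, ZMod.card, nsmul_eq_mul,
    mul_div_assoc, ← mul_sum, ← sum_div, eta_sq]
  push_cast
  field_simp

theorem two_pow_mul_sum_sum_vI_sq_le_sum_walsh {x : Finset (ZMod n)} {j₀ : ZMod n}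
    (hj₀ : j₀ ∈ x) :
    2 ^ (n / 3 - 1) * ∑ a : ZMod n, ∑ t ∈ range (n / 3), vI n a (j₀ - (a + t)) ^ 2 ≤
      ∑ a : ZMod n, ∑ A ∈ (arc n a).powerset, ∑ k : ZMod n,
        (if Odd (A ∩ x.image (fun j => j - k)).card then (vI n a k) ^ 2 else 0) := by
  rw [mul_sum]
  refine sum_le_sum fun a _ => ?_
  have := two_pow_smul_sum_le_sum_powerset_ite_odd (arc n a) x hj₀ (vI n a · ^ 2)
    fun _ => sq_nonneg _
  rwa [card_arc, sum_arc, nsmul_eq_mul, Nat.cast_pow, Nat.cast_ofNat] at this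

end Assembly

/-- For every nonempty `x ⊆ ZMod n`, with `ℓ = max_{k ∈ x} d_{Cₙ}(0,k)`,
`Σ_{I ∈ 𝓘} Σ_{A ⊆ I} Σ_{k} 1[|A ∩ (x - k)| odd]·(v^I_k)² ≥ c·(1 + ℓ²)`. -/
theorem sum_vI_walsh_sq_ge :
    ∃ c : ℝ, 0 < c ∧
      ∀ (n : ℕ) [NeZero n], 3 ≤ n → ∀ x : Finset (ZMod n), x.Nonempty →
        c * (1 + ((x.sup (fun k => cycDist n 0 k) : ℕ) : ℝ) ^ 2) ≤
          ∑ a : ZMod n, ∑ A ∈ (arc n a).powerset, ∑ k : ZMod n,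
            (if Odd (A ∩ x.image (fun j => j - k)).card then (vI n a k) ^ 2 else 0) := by
  refine ⟨1 / 10 ^ 5, by norm_num, fun n _ hn x ⟨j₀, hj₀⟩ => ?_⟩
  set S := n / 3 + ∑ a : ZMod n, ∑ t ∈ range (n / 3), cycDistExcess n (j₀ - 2 * a - t)
  have hℓ : ((x.sup fun k => cycDist n 0 k : ℕ) : ℝ) ≤ n / 2 :=
    (Nat.cast_le.2 (Finset.sup_le fun k _ => cycDist_le_half 0 k)).trans Nat.cast_div_le
  have hS : ((n ^ 3 : ℕ) : ℝ) ≤ 1944 * S := by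
    exact_mod_cast cube_le_sum_sum_cycDistExcess hn j₀
  have hn3 : (3 : ℝ) ≤ n := by exact_mod_cast hn
  calc 1 / 10 ^ 5 * (1 + ((x.sup fun k => cycDist n 0 k : ℕ) : ℝ) ^ 2)
      ≤ 1 / (4 * n) * ((n ^ 3 : ℕ) / 1944 / 2) := by
        rw [show 1 / (4 * n) * ((n ^ 3 : ℕ) / 1944 / 2) = (n : ℝ) ^ 2 / 15552 by
          field_simp; push_cast; ring]
        nlinarith [mul_le_mul hℓ hℓ (Nat.cast_nonneg _) (by positivity)]
    _ ≤ 2 ^ (n / 3 - 1) * dlt n ^ 2 * (S / 2) := by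
        gcongr
        · exact inv_four_mul_le_two_pow_mul_dlt_sq hn
        · rwa [div_le_iff₀' (by norm_num)]
    _ = 2 ^ (n / 3 - 1) * (dlt n ^ 2 * S / 2) := by ring
    _ ≤ 2 ^ (n / 3 - 1) * ∑ a : ZMod n, ∑ t ∈ range (n / 3), vI n a (j₀ - (a + t)) ^ 2 := by
        gcongr
        exact dlt_sq_mul_le_sum_sum_vI_sq hn j₀
    _ ≤ _ := two_pow_mul_sum_sum_vI_sq_le_sum_walsh hj₀
end
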